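/- For every nonzero integer k, the negative continued fraction identity (8k+1)/4 = [[2k, −4]] holds, and consequently σ(4, 8k+1, −1) = 1 − sgn(k). -/

import Mathlib

/-- The invariant `σ(q, p, ε)` (Fukumoto–Furuta–Ue): for integers `p ≠ 0`, `q` coprime to `p`
and a sign `ε ∈ {1, -1}`,
`σ(q,p,ε) = (1/p) ∑_{k=1}^{|p|-1} ( cot(πk/p)·cot(πkq/p) + 2 ε^k csc(πk/p)·csc(πkq/p) )`. -/
noncomputable def sigmaFFU (q p ε : ℤ) : ℝ :=
  (1 / (p : ℝ)) * ∑ k ∈ Finset.Icc 1 (p.natAbs - 1),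
    ((Real.cos (Real.pi * k / p) / Real.sin (Real.pi * k / p)) *
       (Real.cos (Real.pi * k * q / p) / Real.sin (Real.pi * k * q / p)) +
     2 * (ε : ℝ) ^ k *
       ((1 / Real.sin (Real.pi * k / p)) * (1 / Real.sin (Real.pi * k * q / p))))

/-- Negative continued fraction `[[α₁, …, αₙ]] = α₁ - 1/(α₂ - 1/(⋯ - 1/αₙ))`,
defined on lists of integers (`ncf [] = 0` is a junk value). -/
def ncf : List ℤ → ℚ
  | [] => 0
  | [a] => (a : ℚ)
  | a :: b :: l => (a : ℚ) - 1 / ncf (b :: l)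

/-!
With `ζ = exp (2πi/n)` and `z = ζ ^ j`, writing `cot` and `csc` through exponentials turns the
`j`-th term of `σ(q, n, -1)` into `-((z + 1) (z ^ q + 1) + 8 z ^ m) / ((z - 1) (z ^ q - 1))`, where
`2m = n + q + 1`: the sign `(-1) ^ j = exp (πij)` is absorbed into `z ^ m`. Expanding
`1 / (z - 1) = (1/n) ∑_{a<n} a z^a` and summing over `j` by orthogonality of the `n`-th roots of
unity gives `n² σ(q, n, -1) = 3n(n - 1)² - (R(0) + R(1) + R(q) + R(q + 1) + 8 R(m))`, where
`R(e) = ∑_{b<n} b ((-(q b + e)) mod n)`.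
For `q = 4` each `R(e)` splits into five quadratic sums over the ranges of `b` on which the
quotient `⌈(4b + e)/n⌉` is constant, which yields `σ(4, 8K + 1, -1) = 0` and
`σ(4, 8K + 7, -1) = -2`; the case `k < 0` uses `σ(q, -p, ε) = -σ(q, p, ε)`.
-/

open Finset Complex Real

theorem filter_range_dvd_add_eq_singleton {n : ℕ} (hn : 0 < n) (x : ℤ) :
    (range n).filter (fun a : ℕ => (n : ℤ) ∣ a + x) = {((-x) % n).toNat} := by
  have h0 : 0 ≤ (-x) % n := Int.emod_nonneg _ (by omega)
  have hlt : (-x) % n < n := Int.emod_lt_of_pos _ (by omega)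
  ext a
  rw [mem_filter, mem_range, mem_singleton, ← sub_neg_eq_add, ← Int.modEq_iff_dvd]
  constructor
  · rintro ⟨ha, hmod⟩
    have : (-x) % n = a := by rw [hmod, Int.emod_eq_of_lt (by omega) (by omega)]
    omega
  · rintro rfl
    refine ⟨by omega, ?_⟩
    rw [Int.toNat_of_nonneg h0, Int.ModEq, Int.emod_emod_of_dvd _ dvd_rfl]

theorem sum_range_mul_ite_dvd {n : ℕ} (hn : 0 < n) (x : ℤ) :
    ∑ a ∈ range n, (a : ℤ) * (if (n : ℤ) ∣ a + x then 1 else 0) = (-x) % n := by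
  simp_rw [mul_ite, mul_one, mul_zero]
  rw [← sum_filter, filter_range_dvd_add_eq_singleton hn, sum_singleton,
    Int.toNat_of_nonneg (Int.emod_nonneg _ (by omega))]

def residueSum (n q e : ℕ) : ℤ := ∑ b ∈ range n, b * ((-(q * b + e : ℤ)) % n)

def residueCombination (n q : ℕ) : ℤ :=
  residueSum n q 0 + residueSum n q 1 + residueSum n q q + residueSum n q (q + 1) +
    8 * residueSum n q ((n + q + 1) / 2)

section RootsOfUnity

variable {F : Type*} [Field F]

theorem sum_range_natCast_mul_pow_mul_sub_one {n : ℕ} {z : F} (hz : z ^ n = 1) (hz₁ : z ≠ 1) :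
    (∑ a ∈ range n, (a : F) * z ^ a) * (z - 1) = n := by
  have h : ∀ N : ℕ, (∑ a ∈ range N, (a : F) * z ^ a) * (z - 1) =
      N * z ^ N - (∑ a ∈ range N, z ^ a) - z ^ N + 1 := by
    intro N
    induction N with
    | zero => simp
    | succ N ih =>
      rw [sum_range_succ, sum_range_succ, add_mul, ih]
      push_cast
      ring
  rw [h, hz, geom_sum_eq hz₁, hz]
  simp

theorem IsPrimitiveRoot.sum_Ico_pow_pow {ζ : F} {n : ℕ} (hζ : IsPrimitiveRoot ζ n) (hn : 0 < n)
    (e : ℕ) : ∑ j ∈ Ico 1 n, (ζ ^ j) ^ e = (if n ∣ e then (n : F) else 0) - 1 := by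
  simp_rw [pow_right_comm ζ _ e]
  rw [sum_Ico_eq_sub _ hn, sum_range_one, pow_zero]
  split_ifs with he
  · simp [(hζ.pow_eq_one_iff_dvd e).mpr he]
  · have hz : (ζ ^ e) ^ n = 1 := by rw [pow_right_comm, hζ.pow_eq_one, one_pow]
    rw [geom_sum_eq (mt (hζ.pow_eq_one_iff_dvd e).mp he), hz, sub_self, zero_div]

theorem IsPrimitiveRoot.sum_Ico_pow_mul_sum_mul_pow_mul_sum_mul_pow
    {ζ : F} {n : ℕ} (hζ : IsPrimitiveRoot ζ n) (hn : 0 < n) (q e : ℕ) :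
    ∑ j ∈ Ico 1 n, (ζ ^ j) ^ e * ((∑ a ∈ range n, (a : F) * (ζ ^ j) ^ a) *
        ∑ b ∈ range n, (b : F) * ((ζ ^ j) ^ q) ^ b) =
      n * residueSum n q e - (∑ a ∈ range n, (a : F)) ^ 2 := by
  calc _ = ∑ b ∈ range n, ∑ a ∈ range n,
          (a * b : F) * ∑ j ∈ Ico 1 n, (ζ ^ j) ^ (a + q * b + e) := by
        simp_rw [← mul_assoc, mul_sum, sum_mul]
        rw [sum_comm]
        refine sum_congr rfl fun a _ => ?_
        rw [sum_comm]
        refine sum_congr rfl fun b _ => sum_congr rfl fun j _ => ?_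
        ring
    _ = ∑ b ∈ range n, (n * (b * ((∑ a ∈ range n,
          (a : ℤ) * (if (n : ℤ) ∣ a + (q * b + e : ℤ) then 1 else 0) : ℤ) : F)) -
          ∑ a ∈ range n, (a * b : F)) := by
        refine sum_congr rfl fun b _ => ?_
        simp_rw [hζ.sum_Ico_pow_pow hn, Int.cast_sum, mul_sum, ← sum_sub_distrib]
        refine sum_congr rfl fun a _ => ?_
        have hdvd : n ∣ a + q * b + e ↔ (n : ℤ) ∣ a + (q * b + e : ℤ) := by
          rw [← Int.natCast_dvd_natCast]
          push_cast
          rw [add_assoc]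
        simp only [hdvd]
        split_ifs <;> push_cast <;> ring
    _ = _ := by
        simp_rw [sum_range_mul_ite_dvd hn, sum_sub_distrib, ← mul_sum, sq, sum_mul_sum,
          residueSum]
        rw [sum_comm (s := range n) (t := range n) (f := fun a b => (a * b : F))]
        push_cast
        rfl

end RootsOfUnity

theorem Complex.ofReal_cos_div_sin (x : ℝ) :
    ((Real.cos x / Real.sin x : ℝ) : ℂ) =
      (exp (2 * I * x) + 1) / (I * (1 - exp (2 * I * x))) := by
  rw [ofReal_div, ofReal_cos, ofReal_sin, ← cot_eq_cos_div_sin, cot_eq_exp_ratio]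

theorem Complex.ofReal_one_div_sin (x : ℝ) :
    ((1 / Real.sin x : ℝ) : ℂ) = 2 * I * exp (x * I) / (exp (2 * I * x) - 1) := by
  have hsin : Complex.sin x = (exp (2 * I * x) - 1) / (2 * I * exp (x * I)) := by
    have h : exp (2 * I * x) = exp (x * I) * exp (x * I) := by rw [← exp_add]; ring_nf
    rw [Complex.sin, h, show -(x : ℂ) * I = -(x * I) by ring, exp_neg]
    field_simp
    linear_combination (1 - exp (x * I) ^ 2) * I_sq
  rw [ofReal_div, ofReal_one, ofReal_sin, hsin, one_div_div]

theorem Complex.ofReal_cot_mul_cot_add_csc_mul_csc (x y s : ℝ) :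
    ((Real.cos x / Real.sin x * (Real.cos y / Real.sin y) +
        2 * s * (1 / Real.sin x * (1 / Real.sin y)) : ℝ) : ℂ) =
      -((exp (2 * I * x) + 1) * (exp (2 * I * y) + 1) + 8 * s * exp (x * I) * exp (y * I)) /
        ((exp (2 * I * x) - 1) * (exp (2 * I * y) - 1)) := by
  simp only [ofReal_add, ofReal_mul, ofReal_ofNat, ofReal_cos_div_sin, ofReal_one_div_sin]
  set A := exp (2 * I * x)
  set B := exp (2 * I * y)
  -- if `sin x = 0` or `sin y = 0`, both sides are junk divisions by zero, equal to `0`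
  rcases eq_or_ne A 1 with hA | hA
  · simp [hA]
  rcases eq_or_ne B 1 with hB | hB
  · simp [hB]
  field_simp
  linear_combination
    (1 - A) * (1 - B) * ((A + 1) * (B + 1) + 8 * s * exp (I * x) * exp (I * y) * I ^ 2) * I_sq

noncomputable def sigmaTerm (q n j : ℕ) : ℝ :=
  Real.cos (π * j / n) / Real.sin (π * j / n) *
      (Real.cos (π * j * q / n) / Real.sin (π * j * q / n)) +
    2 * (-1) ^ j * (1 / Real.sin (π * j / n) * (1 / Real.sin (π * j * q / n)))

theorem natCast_mul_sigmaFFU_neg_one {n : ℕ} (hn : 0 < n) (q : ℕ) :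
    n * sigmaFFU q n (-1) = ∑ j ∈ Ico 1 n, sigmaTerm q n j := by
  rw [sigmaFFU, ← mul_assoc, Int.cast_natCast,
    mul_one_div_cancel (Nat.cast_ne_zero.mpr hn.ne'), one_mul, Int.natAbs_natCast,
    show Icc 1 (n - 1) = Ico 1 n by ext; simp; omega]
  push_cast
  rfl

theorem ofReal_sigmaTerm {n q m : ℕ} (hn : n ≠ 0) (hm : 2 * m = n + q + 1) (j : ℕ) :
    (sigmaTerm q n j : ℂ) =
      -((exp (2 * π * I / n) ^ j + 1) * ((exp (2 * π * I / n) ^ j) ^ q + 1) +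
          8 * (exp (2 * π * I / n) ^ j) ^ m) /
        ((exp (2 * π * I / n) ^ j - 1) * ((exp (2 * π * I / n) ^ j) ^ q - 1)) := by
  have hexp : ∀ N : ℕ, exp (2 * I * (π * j * N / n : ℝ)) = (exp (2 * π * I / n) ^ j) ^ N := by
    intro N
    rw [← pow_mul, ← Complex.exp_nat_mul]
    push_cast
    ring_nf
  have hsign : ((-1) ^ j : ℝ) * exp ((π * j / n : ℝ) * I) * exp ((π * j * q / n : ℝ) * I) =
      (exp (2 * π * I / n) ^ j) ^ m := by
    have hnC : (n : ℂ) ≠ 0 := Nat.cast_ne_zero.mpr hn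
    have hmC : (2 * m : ℂ) = n + q + 1 := by exact_mod_cast hm
    rw [ofReal_pow, ofReal_neg, ofReal_one, ← exp_pi_mul_I, ← pow_mul, ← Complex.exp_nat_mul,
      ← Complex.exp_nat_mul, ← Complex.exp_add, ← Complex.exp_add]
    congr 1
    push_cast
    field_simp
    linear_combination (-(j : ℂ)) * hmC
  have h1 := hexp 1
  simp only [Nat.cast_one, mul_one, pow_one] at h1
  rw [sigmaTerm, ofReal_cot_mul_cot_add_csc_mul_csc, h1, hexp q, mul_assoc 8, mul_assoc 8,
    hsign]

theorem sq_mul_ofReal_sigmaTerm {n q m j : ℕ} (hq : n.Coprime q) (hm : 2 * m = n + q + 1)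
    (hj : j ∈ Ico 1 n) :
    (n : ℂ) ^ 2 * sigmaTerm q n j =
      -((exp (2 * π * I / n) ^ j + 1) * ((exp (2 * π * I / n) ^ j) ^ q + 1) +
          8 * (exp (2 * π * I / n) ^ j) ^ m) *
        ((∑ a ∈ range n, (a : ℂ) * (exp (2 * π * I / n) ^ j) ^ a) *
          ∑ b ∈ range n, (b : ℂ) * ((exp (2 * π * I / n) ^ j) ^ q) ^ b) := by
  rw [mem_Ico] at hj
  rw [ofReal_sigmaTerm (by omega) hm]
  have hζ : IsPrimitiveRoot (exp (2 * π * I / n)) n := isPrimitiveRoot_exp n (by omega)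
  set z := exp (2 * π * I / n) ^ j
  have hnj : ¬ n ∣ j := fun h => (Nat.le_of_dvd (by omega) h).not_gt hj.2
  have hz : z ^ n = 1 := by rw [pow_right_comm, hζ.pow_eq_one, one_pow]
  have hzq : (z ^ q) ^ n = 1 := by rw [pow_right_comm, hz, one_pow]
  have h₁ := sum_range_natCast_mul_pow_mul_sub_one hz (mt (hζ.pow_eq_one_iff_dvd j).mp hnj)
  have h₂ := sum_range_natCast_mul_pow_mul_sub_one hzq (by
    rw [← pow_mul]
    exact mt (hζ.pow_eq_one_iff_dvd _).mp fun h => hnj (hq.dvd_of_dvd_mul_right h))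
  have hn0 : (n : ℂ) ≠ 0 := Nat.cast_ne_zero.mpr (by omega)
  have hd₁ : z - 1 ≠ 0 := fun h => hn0 (by rw [← h₁, h, mul_zero])
  have hd₂ : z ^ q - 1 ≠ 0 := fun h => hn0 (by rw [← h₂, h, mul_zero])
  have hn2 : (n : ℂ) ^ 2 = (∑ a ∈ range n, (a : ℂ) * z ^ a) * (z - 1) *
      ((∑ b ∈ range n, (b : ℂ) * (z ^ q) ^ b) * (z ^ q - 1)) := by
    rw [h₁, h₂, sq]
  rw [hn2]
  field_simp

theorem sq_mul_sigmaFFU_neg_one {n q : ℕ} (hn : 0 < n) (hq : n.Coprime q) (hodd : Odd (n + q)) :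
    (n : ℝ) ^ 2 * sigmaFFU q n (-1) = 3 * n * (n - 1) ^ 2 - residueCombination n q := by
  obtain ⟨m, hm⟩ : ∃ m, 2 * m = n + q + 1 := ⟨(n + q + 1) / 2, by obtain ⟨r, hr⟩ := hodd; omega⟩
  have hζ : IsPrimitiveRoot (exp (2 * π * I / n)) n := isPrimitiveRoot_exp n hn.ne'
  have hsum := sum_congr rfl fun j hj => sq_mul_ofReal_sigmaTerm (j := j) hq hm hj
  have hexpand : ∀ z S : ℂ, -((z + 1) * (z ^ q + 1) + 8 * z ^ m) * S =
      -(z ^ 0 * S + z ^ 1 * S + z ^ q * S + z ^ (q + 1) * S + 8 * (z ^ m * S)) := by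
    intros; ring
  simp only [hexpand, sum_neg_distrib, sum_add_distrib, ← mul_sum,
    hζ.sum_Ico_pow_mul_sum_mul_pow_mul_sum_mul_pow hn] at hsum
  have hgauss : (∑ a ∈ range n, (a : ℂ)) * 2 = n * (n - 1) := by
    rw [← Nat.cast_sum, ← Nat.cast_two, ← Nat.cast_mul, sum_range_id_mul_two, Nat.cast_mul,
      Nat.cast_pred hn]
  refine mul_left_cancel₀ (Nat.cast_ne_zero.mpr hn.ne' : (n : ℝ) ≠ 0) (ofReal_injective ?_)
  calc ((n * (n ^ 2 * sigmaFFU q n (-1)) : ℝ) : ℂ) =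
        (n : ℂ) ^ 2 * ((n * sigmaFFU q n (-1) : ℝ) : ℂ) := by push_cast; ring
    _ = _ := by
        rw [natCast_mul_sigmaFFU_neg_one hn, ofReal_sum, hsum, residueCombination,
          show (n + q + 1) / 2 = m by omega]
        push_cast
        linear_combination (3 * (2 * ∑ a ∈ range n, (a : ℂ) + n * (n - 1))) * hgauss

theorem sigmaFFU_neg (q p ε : ℤ) : sigmaFFU q (-p) ε = -sigmaFFU q p ε := by
  simp only [sigmaFFU, Int.natAbs_neg, Int.cast_neg, div_neg, Real.cos_neg, Real.sin_neg,
    neg_mul_neg]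
  exact neg_mul _ _

theorem six_mul_sum_Ico_mul_neg_emod_eq {n q e c u v w : ℕ} (huv : u ≤ v) (hvw : v ≤ w)
    (hc : ∀ b, u ≤ b → b < v → q * b + e ≤ c * n ∧ c * n < q * b + e + n) :
    6 * ∑ b ∈ Ico u w, (b : ℤ) * ((-(q * b + e : ℤ)) % n) =
      6 * ∑ b ∈ Ico v w, (b : ℤ) * ((-(q * b + e : ℤ)) % n) +
        (3 * (c * n - e) * (v * (v - 1) - u * (u - 1)) -
          q * (v * (v - 1) * (2 * v - 1) - u * (u - 1) * (2 * u - 1)) : ℤ) := by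
  rw [← sum_Ico_consecutive _ huv hvw, mul_add, add_comm]
  congr 1
  have hrem : ∀ b ∈ Ico u v, (-(q * b + e : ℤ)) % n = c * n - e - q * b := by
    intro b hb
    rw [mem_Ico] at hb
    obtain ⟨h₁, h₂⟩ := hc b hb.1 hb.2
    rw [show -(q * b + e : ℤ) = (c * n - e - q * b) + n * (-c) by ring,
      Int.add_mul_emod_self_left, Int.emod_eq_of_lt (by omega) (by omega)]
  rw [sum_congr rfl fun b hb => by rw [hrem b hb]]
  clear hc hrem hvw
  induction v, huv using Nat.le_induction with
  | base => simp
  | succ v hv ih =>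
    rw [sum_Ico_succ_top hv, mul_add, ih]
    push_cast
    ring

section

variable (K : ℕ)

theorem six_mul_residueSum_eight_mul_add_one_zero :
    6 * residueSum (8 * K + 1) 4 0 = 704 * K ^ 3 + 312 * K ^ 2 + 28 * K := by
  rw [residueSum, range_eq_Ico, six_mul_sum_Ico_mul_neg_emod_eq (v := 1) (c := 0),
    six_mul_sum_Ico_mul_neg_emod_eq (v := 2 * K + 1) (c := 1),
    six_mul_sum_Ico_mul_neg_emod_eq (v := 4 * K + 1) (c := 2),
    six_mul_sum_Ico_mul_neg_emod_eq (v := 6 * K + 1) (c := 3),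
    six_mul_sum_Ico_mul_neg_emod_eq (v := 8 * K + 1) (c := 4), Ico_self, sum_empty]
  · push_cast; ring
  all_goals intros; omega

theorem six_mul_residueSum_eight_mul_add_one_one :
    6 * residueSum (8 * K + 1) 4 1 = 704 * K ^ 3 + 120 * K ^ 2 + 4 * K := by
  rw [residueSum, range_eq_Ico, six_mul_sum_Ico_mul_neg_emod_eq (v := 2 * K + 1) (c := 1),
    six_mul_sum_Ico_mul_neg_emod_eq (v := 4 * K + 1) (c := 2),
    six_mul_sum_Ico_mul_neg_emod_eq (v := 6 * K + 1) (c := 3),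
    six_mul_sum_Ico_mul_neg_emod_eq (v := 8 * K + 1) (c := 4), Ico_self, sum_empty]
  · push_cast; ring
  all_goals intros; omega

theorem six_mul_residueSum_eight_mul_add_one_four :
    6 * residueSum (8 * K + 1) 4 4 = 704 * K ^ 3 + 120 * K ^ 2 + 4 * K := by
  rw [residueSum, range_eq_Ico, six_mul_sum_Ico_mul_neg_emod_eq (v := 2 * K) (c := 1),
    six_mul_sum_Ico_mul_neg_emod_eq (v := 4 * K) (c := 2),
    six_mul_sum_Ico_mul_neg_emod_eq (v := 6 * K) (c := 3),
    six_mul_sum_Ico_mul_neg_emod_eq (v := 8 * K + 1) (c := 4), Ico_self, sum_empty]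
  · push_cast; ring
  all_goals intros; omega

theorem six_mul_residueSum_eight_mul_add_one_five :
    6 * residueSum (8 * K + 1) 4 5 = 704 * K ^ 3 + 312 * K ^ 2 + 28 * K := by
  rw [residueSum, range_eq_Ico, six_mul_sum_Ico_mul_neg_emod_eq (v := 2 * K) (c := 1),
    six_mul_sum_Ico_mul_neg_emod_eq (v := 4 * K) (c := 2),
    six_mul_sum_Ico_mul_neg_emod_eq (v := 6 * K) (c := 3),
    six_mul_sum_Ico_mul_neg_emod_eq (v := 8 * K) (c := 4),
    six_mul_sum_Ico_mul_neg_emod_eq (v := 8 * K + 1) (c := 5), Ico_self, sum_empty]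
  · push_cast; ring
  all_goals intros; omega

theorem six_mul_residueSum_eight_mul_add_one_four_mul_add_three :
    6 * residueSum (8 * K + 1) 4 (4 * K + 3) = 800 * K ^ 3 + 36 * K ^ 2 - 8 * K := by
  rw [residueSum, range_eq_Ico, six_mul_sum_Ico_mul_neg_emod_eq (v := K) (c := 1),
    six_mul_sum_Ico_mul_neg_emod_eq (v := 3 * K) (c := 2),
    six_mul_sum_Ico_mul_neg_emod_eq (v := 5 * K + 1) (c := 3),
    six_mul_sum_Ico_mul_neg_emod_eq (v := 7 * K + 1) (c := 4),
    six_mul_sum_Ico_mul_neg_emod_eq (v := 8 * K + 1) (c := 5), Ico_self, sum_empty]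
  · push_cast; ring
  all_goals intros; omega

theorem six_mul_residueSum_eight_mul_add_seven_zero :
    6 * residueSum (8 * K + 7) 4 0 = 704 * K ^ 3 + 1800 * K ^ 2 + 1516 * K + 420 := by
  rw [residueSum, range_eq_Ico, six_mul_sum_Ico_mul_neg_emod_eq (v := 1) (c := 0),
    six_mul_sum_Ico_mul_neg_emod_eq (v := 2 * K + 2) (c := 1),
    six_mul_sum_Ico_mul_neg_emod_eq (v := 4 * K + 4) (c := 2),
    six_mul_sum_Ico_mul_neg_emod_eq (v := 6 * K + 6) (c := 3),
    six_mul_sum_Ico_mul_neg_emod_eq (v := 8 * K + 7) (c := 4), Ico_self, sum_empty]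
  · push_cast; ring
  all_goals intros; omega

theorem six_mul_residueSum_eight_mul_add_seven_one :
    6 * residueSum (8 * K + 7) 4 1 = 704 * K ^ 3 + 1608 * K ^ 2 + 1204 * K + 294 := by
  rw [residueSum, range_eq_Ico, six_mul_sum_Ico_mul_neg_emod_eq (v := 2 * K + 2) (c := 1),
    six_mul_sum_Ico_mul_neg_emod_eq (v := 4 * K + 4) (c := 2),
    six_mul_sum_Ico_mul_neg_emod_eq (v := 6 * K + 6) (c := 3),
    six_mul_sum_Ico_mul_neg_emod_eq (v := 8 * K + 7) (c := 4), Ico_self, sum_empty]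
  · push_cast; ring
  all_goals intros; omega

theorem six_mul_residueSum_eight_mul_add_seven_four :
    6 * residueSum (8 * K + 7) 4 4 = 704 * K ^ 3 + 1608 * K ^ 2 + 1204 * K + 294 := by
  rw [residueSum, range_eq_Ico, six_mul_sum_Ico_mul_neg_emod_eq (v := 2 * K + 1) (c := 1),
    six_mul_sum_Ico_mul_neg_emod_eq (v := 4 * K + 3) (c := 2),
    six_mul_sum_Ico_mul_neg_emod_eq (v := 6 * K + 5) (c := 3),
    six_mul_sum_Ico_mul_neg_emod_eq (v := 8 * K + 7) (c := 4), Ico_self, sum_empty]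
  · push_cast; ring
  all_goals intros; omega

theorem six_mul_residueSum_eight_mul_add_seven_five :
    6 * residueSum (8 * K + 7) 4 5 = 704 * K ^ 3 + 1800 * K ^ 2 + 1516 * K + 420 := by
  rw [residueSum, range_eq_Ico, six_mul_sum_Ico_mul_neg_emod_eq (v := 2 * K + 1) (c := 1),
    six_mul_sum_Ico_mul_neg_emod_eq (v := 4 * K + 3) (c := 2),
    six_mul_sum_Ico_mul_neg_emod_eq (v := 6 * K + 5) (c := 3),
    six_mul_sum_Ico_mul_neg_emod_eq (v := 8 * K + 6) (c := 4),
    six_mul_sum_Ico_mul_neg_emod_eq (v := 8 * K + 7) (c := 5), Ico_self, sum_empty]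
  · push_cast; ring
  all_goals intros; omega

theorem six_mul_residueSum_eight_mul_add_seven_four_mul_add_six :
    6 * residueSum (8 * K + 7) 4 (4 * K + 6) = 800 * K ^ 3 + 1980 * K ^ 2 + 1648 * K + 462 := by
  rw [residueSum, range_eq_Ico, six_mul_sum_Ico_mul_neg_emod_eq (v := K + 1) (c := 1),
    six_mul_sum_Ico_mul_neg_emod_eq (v := 3 * K + 3) (c := 2),
    six_mul_sum_Ico_mul_neg_emod_eq (v := 5 * K + 4) (c := 3),
    six_mul_sum_Ico_mul_neg_emod_eq (v := 7 * K + 6) (c := 4),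
    six_mul_sum_Ico_mul_neg_emod_eq (v := 8 * K + 7) (c := 5), Ico_self, sum_empty]
  · push_cast; ring
  all_goals intros; omega

theorem residueCombination_eight_mul_add_one :
    residueCombination (8 * K + 1) 4 = 3 * (8 * K + 1) * (8 * K) ^ 2 := by
  rw [residueCombination, show (8 * K + 1 + 4 + 1) / 2 = 4 * K + 3 by omega,
    show 4 + 1 = 5 from rfl]
  linarith [six_mul_residueSum_eight_mul_add_one_zero K, six_mul_residueSum_eight_mul_add_one_one K,
    six_mul_residueSum_eight_mul_add_one_four K, six_mul_residueSum_eight_mul_add_one_five K,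
    six_mul_residueSum_eight_mul_add_one_four_mul_add_three K]

theorem residueCombination_eight_mul_add_seven :
    residueCombination (8 * K + 7) 4 =
      3 * (8 * K + 7) * (8 * K + 6) ^ 2 + 2 * (8 * K + 7) ^ 2 := by
  rw [residueCombination, show (8 * K + 7 + 4 + 1) / 2 = 4 * K + 6 by omega,
    show 4 + 1 = 5 from rfl]
  linarith [six_mul_residueSum_eight_mul_add_seven_zero K,
    six_mul_residueSum_eight_mul_add_seven_one K, six_mul_residueSum_eight_mul_add_seven_four K,
    six_mul_residueSum_eight_mul_add_seven_five K,
    six_mul_residueSum_eight_mul_add_seven_four_mul_add_six K]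

theorem sigmaFFU_four_eight_mul_add_one : sigmaFFU 4 (8 * K + 1 : ℕ) (-1) = 0 := by
  have h := sq_mul_sigmaFFU_neg_one (n := 8 * K + 1) (q := 4) (by omega)
    (Nat.Coprime.pow_right 2 (Nat.coprime_two_right.2 ⟨4 * K, by ring⟩)) ⟨4 * K + 2, by ring⟩
  rw [residueCombination_eight_mul_add_one, Nat.cast_ofNat] at h
  refine (mul_eq_zero.mp (h.trans ?_)).resolve_left (by positivity)
  push_cast
  ring

theorem sigmaFFU_four_eight_mul_add_seven : sigmaFFU 4 (8 * K + 7 : ℕ) (-1) = -2 := by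
  have h := sq_mul_sigmaFFU_neg_one (n := 8 * K + 7) (q := 4) (by omega)
    (Nat.Coprime.pow_right 2 (Nat.coprime_two_right.2 ⟨4 * K + 3, by ring⟩)) ⟨4 * K + 5, by ring⟩
  rw [residueCombination_eight_mul_add_seven, Nat.cast_ofNat] at h
  refine mul_left_cancel₀ (by positivity : ((8 * K + 7 : ℕ) : ℝ) ^ 2 ≠ 0) (h.trans ?_)
  push_cast
  ring

end

/-- For `k ≠ 0`, `(8k+1)/4 = [[2k, -4]]` and `σ(4, 8k+1, -1) = 1 - sgn k`. -/
theorem ncf_sigma_eight_k_one (k : ℤ) (hk : k ≠ 0) :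
    ncf [2 * k, -4] = ((8 * k + 1 : ℤ) : ℚ) / 4 ∧
      sigmaFFU 4 (8 * k + 1) (-1) = 1 - ((Int.sign k : ℤ) : ℝ) := by
  refine ⟨by simp [ncf]; ring, ?_⟩
  rcases hk.lt_or_gt with hneg | hpos
  · obtain ⟨K, rfl⟩ : ∃ K : ℕ, k = -K - 1 := ⟨(-k - 1).toNat, by omega⟩
    rw [show 8 * (-K - 1 : ℤ) + 1 = -((8 * K + 7 : ℕ) : ℤ) by push_cast; ring, sigmaFFU_neg,
      sigmaFFU_four_eight_mul_add_seven, Int.sign_eq_neg_one_of_neg hneg]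
    norm_num
  · lift k to ℕ using hpos.le
    rw [show 8 * (k : ℤ) + 1 = ((8 * k + 1 : ℕ) : ℤ) by push_cast; ring,
      sigmaFFU_four_eight_mul_add_one, Int.sign_eq_one_of_pos hpos]
    norm_num
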